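/- arXiv:1911.05862 — 3 statements merged into one kernel-verified Lean document; each statement's English description precedes it below -/
import Mathlib

section
/- With the diagonal action of ℤ_n × ℤ_m on ℂ^N determined by integer vectors α, β ∈ ℤ^N and F = F_{ℤ_n×ℤ_m} the associated monomial map: F satisfies the non-parallel property, i.e. if x, y ∈ ℂ^N satisfy ‖x‖ = ‖y‖ = 1 and F(x) = λ F(y) for some real λ > 0, then x ~ y. -/
/-!
After comparing moduli, `λ = 1` and `x_k = ζ ^ t_k * y_k` with `ζ` a primitive `nm`-th root of
unity. The components of `F` say that `t` is killed by every minimal relation modulo `nm` of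
support at most three among the vectors `v_k = (m α_k, n β_k)`, over the coordinates where
`y_k ≠ 0`. These small relations generate all relations: working modulo each prime power
`q ^ L ∥ nm`, any family of vectors in `(ℤ/q^L)²` is spanned by two of its members, so the
coefficient of the least index of a relation can be removed by a minimal relation of support at
most three. Hence `t` is killed by all relations, and duality for the finite group `(ℤ/nm)^S`
gives `a, b` with `t_k ≡ a m α_k + b n β_k`, that is `x = (a, b) · y`.
-/

/-- The diagonal unitary action of `(a,b) ∈ ℤ_n × ℤ_m` on `ℂ^N` determined by integer
vectors `α, β`: the `k`-th coordinate is multiplied by `e^{2πi(aα_k/n + bβ_k/m)}`. -/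
noncomputable def zact {N : ℕ} (n m : ℕ) (α β : Fin N → ℤ) (a b : ℤ)
    (x : EuclideanSpace ℂ (Fin N)) : EuclideanSpace ℂ (Fin N) :=
  WithLp.toLp 2 (fun k => Complex.exp (2 * Real.pi * Complex.I *
    (((a * α k : ℤ) : ℂ) / (n : ℂ) + ((b * β k : ℤ) : ℂ) / (m : ℂ))) * x k)

open Submodule

namespace NonParallel

theorem dvd_of_isLeast_smul_mem {X : Type*} [AddCommGroup X] {N : Submodule ℤ X} {x : X} {ρ : ℕ}
    (hρ : IsLeast {s : ℕ | 0 < s ∧ (s : ℤ) • x ∈ N} ρ) {z : ℤ} (hz : z • x ∈ N) : (ρ : ℤ) ∣ z := by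
  obtain ⟨⟨hρpos, hρx⟩, hρmin⟩ := hρ
  have hρ0 : (0 : ℤ) < ρ := by exact_mod_cast hρpos
  have hmod : (z % ρ) • x ∈ N := by
    rw [Int.emod_def, sub_smul, mul_comm, mul_smul]
    exact N.sub_mem hz (N.smul_mem _ hρx)
  refine Int.dvd_of_emod_eq_zero (le_antisymm ?_ (Int.emod_nonneg _ hρ0.ne'))
  by_contra! hpos
  have := hρmin (a := (z % ρ).toNat) ⟨by omega, by rwa [Int.toNat_of_nonneg hpos.le]⟩
  have := Int.emod_lt_of_pos z hρ0
  omega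

theorem exists_eq_mul_add_mul_of_gcd_dvd {a K b : ℤ} (h : (Int.gcd a K : ℤ) ∣ b) :
    ∃ p r : ℤ, b = p * a + r * K := by
  obtain ⟨k, rfl⟩ := h
  exact ⟨Int.gcdA a K * k, Int.gcdB a K * k, by rw [Int.gcd_eq_gcd_ab]; ring⟩

theorem exists_eq_mul_add_mul_of_dvd_mul {ρ Q R c : ℤ} (hQR : IsCoprime Q R) (h : ρ ∣ R * c) :
    ∃ κ y : ℤ, c = κ * ρ + y * Q := by
  refine exists_eq_mul_add_mul_of_gcd_dvd ?_
  have hgQ : IsCoprime (Int.gcd ρ Q : ℤ) R :=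
    hQR.of_isCoprime_of_dvd_left (Int.gcd_dvd_right _ _)
  exact hgQ.dvd_of_dvd_mul_left ((Int.gcd_dvd_left _ _).trans h)

theorem exists_eq_mul_add_mul_or_of_prime {q : ℕ} (hq : q.Prime) (L : ℕ) (a b : ℤ) :
    (∃ p r : ℤ, b = p * a + r * (q : ℤ) ^ L) ∨ ∃ p r : ℤ, a = p * b + r * (q : ℤ) ^ L := by
  have hpow (x : ℤ) : ∃ i : ℕ, (Int.gcd x ((q : ℤ) ^ L) : ℤ) = (q : ℤ) ^ i := by
    have : Int.gcd x ((q : ℤ) ^ L) ∣ q ^ L := by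
      exact_mod_cast Int.gcd_dvd_right x ((q : ℤ) ^ L)
    obtain ⟨i, -, hi⟩ := (Nat.dvd_prime_pow hq).1 this
    exact ⟨i, by rw [hi]; push_cast; rfl⟩
  obtain ⟨i, hi⟩ := hpow a
  obtain ⟨j, hj⟩ := hpow b
  rcases le_total i j with hij | hij
  · refine .inl (exists_eq_mul_add_mul_of_gcd_dvd (?_ : _ ∣ _))
    exact (hi ▸ hj ▸ pow_dvd_pow _ hij).trans (Int.gcd_dvd_left b _)
  · refine .inr (exists_eq_mul_add_mul_of_gcd_dvd (?_ : _ ∣ _))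
    exact (hj ▸ hi ▸ pow_dvd_pow _ hij).trans (Int.gcd_dvd_left a _)

def scaledLattice (K : ℤ) : Submodule ℤ (ℤ × ℤ) :=
  Submodule.prod (Ideal.span {K}) (Ideal.span {K})

theorem mem_scaledLattice {K : ℤ} {p : ℤ × ℤ} : p ∈ scaledLattice K ↔ K ∣ p.1 ∧ K ∣ p.2 := by
  simp [scaledLattice, Submodule.mem_prod, Ideal.mem_span_singleton]

theorem scaledLattice_mono {K K' : ℤ} (h : K ∣ K') : scaledLattice K' ≤ scaledLattice K :=
  fun _ hp => mem_scaledLattice.2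
    ⟨h.trans (mem_scaledLattice.1 hp).1, h.trans (mem_scaledLattice.1 hp).2⟩

theorem mul_smul_mem_scaledLattice (K z : ℤ) (p : ℤ × ℤ) : (K * z) • p ∈ scaledLattice K :=
  mem_scaledLattice.2 ⟨⟨z * p.1, by simp; ring⟩, ⟨z * p.2, by simp; ring⟩⟩

theorem smul_mem_sup_scaledLattice_mul {N : Submodule ℤ (ℤ × ℤ)} {Q : ℤ} (R : ℤ) {x : ℤ × ℤ}
    (hx : x ∈ N ⊔ scaledLattice Q) : R • x ∈ N ⊔ scaledLattice (Q * R) := by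
  obtain ⟨y, hy, l, hl, rfl⟩ := mem_sup.1 hx
  rw [smul_add]
  refine add_mem (mem_sup_left (N.smul_mem R hy)) (mem_sup_right ?_)
  obtain ⟨⟨a, ha⟩, ⟨b, hb⟩⟩ := mem_scaledLattice.1 hl
  exact mem_scaledLattice.2 ⟨⟨a, by simp [ha]; ring⟩, ⟨b, by simp [hb]; ring⟩⟩

theorem mem_span_pair_sup_scaledLattice_iff {K : ℤ} {u w p : ℤ × ℤ} :
    p ∈ span ℤ {u, w} ⊔ scaledLattice K ↔
      ∃ c d z₁ z₂ : ℤ, p = c • u + d • w + (K * z₁, K * z₂) := by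
  constructor
  · rintro hp
    obtain ⟨y, hy, l, hl, rfl⟩ := mem_sup.1 hp
    obtain ⟨c, d, rfl⟩ := mem_span_pair.1 hy
    obtain ⟨⟨z₁, h₁⟩, ⟨z₂, h₂⟩⟩ := mem_scaledLattice.1 hl
    exact ⟨c, d, z₁, z₂, by rw [← h₁, ← h₂]⟩
  · rintro ⟨c, d, z₁, z₂, rfl⟩
    exact add_mem (mem_sup_left (mem_span_pair.2 ⟨c, d, rfl⟩))
      (mem_sup_right (mem_scaledLattice.2 ⟨⟨z₁, rfl⟩, ⟨z₂, rfl⟩⟩))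

-- `w - p • v` has cross product with `u` divisible by `K`; as `u.1` is a unit modulo `K`, it is a
-- multiple of `u` modulo `K`.
theorem mem_span_pair_sup_scaledLattice_of_cross {K : ℤ} {u v w : ℤ × ℤ} (hu : IsCoprime u.1 K)
    {p r : ℤ} (h : u.1 * w.2 - u.2 * w.1 = p * (u.1 * v.2 - u.2 * v.1) + r * K) :
    w ∈ span ℤ {u, v} ⊔ scaledLattice K := by
  obtain ⟨A, B, hAB⟩ := hu
  set c := A * (w.1 - p * v.1)
  obtain ⟨z, hz⟩ : K ∣ w.2 - (c * u.2 + p * v.2) := by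
    refine IsCoprime.dvd_of_dvd_mul_right (IsCoprime.symm ⟨A, B, hAB⟩)
      ⟨r + B * u.2 * (w.1 - p * v.1), ?_⟩
    linear_combination h - (u.2 * (w.1 - p * v.1)) * hAB
  refine mem_span_pair_sup_scaledLattice_iff.2 ⟨c, p, B * (w.1 - p * v.1), z, Prod.ext ?_ ?_⟩
  · simp only [Prod.fst_add, Prod.smul_fst, smul_eq_mul, c]
    linear_combination -(w.1 - p * v.1) * hAB
  · simp only [Prod.snd_add, Prod.smul_snd, smul_eq_mul]
    linear_combination hz

theorem swap_mem_span_pair_sup_scaledLattice {K : ℤ} {u v w : ℤ × ℤ}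
    (h : w ∈ span ℤ {u, v} ⊔ scaledLattice K) :
    w.swap ∈ span ℤ {u.swap, v.swap} ⊔ scaledLattice K := by
  obtain ⟨c, d, z₁, z₂, rfl⟩ := mem_span_pair_sup_scaledLattice_iff.1 h
  exact mem_span_pair_sup_scaledLattice_iff.2 ⟨c, d, z₂, z₁, by ext <;> simp⟩

theorem smul_mem_span_pair_sup_scaledLattice {K : ℤ} {u v w : ℤ × ℤ} (a : ℤ)
    (h : w ∈ span ℤ {u, v} ⊔ scaledLattice K) :
    a • w ∈ span ℤ {a • u, a • v} ⊔ scaledLattice (a * K) := by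
  obtain ⟨c, d, z₁, z₂, rfl⟩ := mem_span_pair_sup_scaledLattice_iff.1 h
  exact mem_span_pair_sup_scaledLattice_iff.2 ⟨c, d, z₁, z₂, by ext <;> simp <;> ring⟩

theorem span_pair_sup_le {K : ℤ} {u v u' v' : ℤ × ℤ}
    (hu : u ∈ span ℤ {u', v'} ⊔ scaledLattice K) (hv : v ∈ span ℤ {u', v'} ⊔ scaledLattice K) :
    span ℤ {u, v} ⊔ scaledLattice K ≤ span ℤ {u', v'} ⊔ scaledLattice K :=
  sup_le (span_le.2 (Set.insert_subset hu (Set.singleton_subset_iff.2 hv))) le_sup_right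

section PrimePower

variable {q : ℕ} (hq : q.Prime) (L : ℕ)
include hq

theorem mem_span_pair_sup_or_of_not_dvd_fst {u v w : ℤ × ℤ} (hu : ¬ (q : ℤ) ∣ u.1) :
    w ∈ span ℤ {u, v} ⊔ scaledLattice ((q : ℤ) ^ L) ∨
      v ∈ span ℤ {u, w} ⊔ scaledLattice ((q : ℤ) ^ L) := by
  have hcop : IsCoprime u.1 ((q : ℤ) ^ L) :=
    ((Nat.prime_iff_prime_int.1 hq).coprime_iff_not_dvd.2 hu).symm.pow_right
  exact (exists_eq_mul_add_mul_or_of_prime hq L _ _).imp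
    (fun ⟨_, _, h⟩ => mem_span_pair_sup_scaledLattice_of_cross hcop h)
    (fun ⟨_, _, h⟩ => mem_span_pair_sup_scaledLattice_of_cross hcop h)

theorem mem_span_pair_sup_or_of_not_dvd {u v w : ℤ × ℤ} (hu : ¬ (q : ℤ) ∣ u.1 ∨ ¬ (q : ℤ) ∣ u.2) :
    w ∈ span ℤ {u, v} ⊔ scaledLattice ((q : ℤ) ^ L) ∨
      v ∈ span ℤ {u, w} ⊔ scaledLattice ((q : ℤ) ^ L) := by
  rcases hu with hu | hu
  · exact mem_span_pair_sup_or_of_not_dvd_fst hq L hu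
  · simpa using (mem_span_pair_sup_or_of_not_dvd_fst hq L (u := u.swap) (v := v.swap)
      (w := w.swap) hu).imp swap_mem_span_pair_sup_scaledLattice
        swap_mem_span_pair_sup_scaledLattice

-- Either some vector has a coordinate prime to `q`, and the cross-product criterion applies
-- because divisibility among residues modulo `q ^ L` is a total preorder, or all three are
-- divisible by `q` and we descend to `q ^ (L - 1)`.
theorem mem_span_pair_sup_or_or (u v w : ℤ × ℤ) :
    w ∈ span ℤ {u, v} ⊔ scaledLattice ((q : ℤ) ^ L) ∨
      v ∈ span ℤ {u, w} ⊔ scaledLattice ((q : ℤ) ^ L) ∨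
      u ∈ span ℤ {v, w} ⊔ scaledLattice ((q : ℤ) ^ L) := by
  induction L generalizing u v w with
  | zero => exact .inl (mem_sup_right (mem_scaledLattice.2 (by simp)))
  | succ L ih =>
    by_cases hu : ¬ (q : ℤ) ∣ u.1 ∨ ¬ (q : ℤ) ∣ u.2
    · exact (mem_span_pair_sup_or_of_not_dvd hq _ hu).imp_right .inl
    by_cases hv : ¬ (q : ℤ) ∣ v.1 ∨ ¬ (q : ℤ) ∣ v.2
    · rcases mem_span_pair_sup_or_of_not_dvd hq _ (v := u) (w := w) hv with h | h
      · exact .inl (by rwa [Set.pair_comm])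
      · exact .inr (.inr h)
    by_cases hw : ¬ (q : ℤ) ∣ w.1 ∨ ¬ (q : ℤ) ∣ w.2
    · rcases mem_span_pair_sup_or_of_not_dvd hq _ (v := u) (w := v) hw with h | h
      · exact .inr (.inl (by rwa [Set.pair_comm]))
      · exact .inr (.inr (by rwa [Set.pair_comm]))
    simp only [not_or, not_not] at hu hv hw
    have hdiv (x : ℤ × ℤ) (hx : (q : ℤ) ∣ x.1 ∧ (q : ℤ) ∣ x.2) : ∃ x', x = (q : ℤ) • x' :=
      let ⟨⟨a, ha⟩, ⟨b, hb⟩⟩ := hx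
      ⟨(a, b), Prod.ext ha hb⟩
    obtain ⟨u, rfl⟩ := hdiv u hu
    obtain ⟨v, rfl⟩ := hdiv v hv
    obtain ⟨w, rfl⟩ := hdiv w hw
    rw [pow_succ']
    exact (ih u v w).imp (smul_mem_span_pair_sup_scaledLattice _)
      (Or.imp (smul_mem_span_pair_sup_scaledLattice _) (smul_mem_span_pair_sup_scaledLattice _))

theorem exists_subset_card_le_two_mem_span_sup {ι : Type*} [DecidableEq ι] (v : ι → ℤ × ℤ)
    (T : Finset ι) :
    ∃ P ⊆ T, P.card ≤ 2 ∧ ∀ k ∈ T, v k ∈ span ℤ (v '' P) ⊔ scaledLattice ((q : ℤ) ^ L) := by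
  induction T using Finset.induction_on with
  | empty => exact ⟨∅, subset_rfl, by simp, by simp⟩
  | @insert a T ha ih =>
    obtain ⟨P, hPT, hcard, hspan⟩ := ih
    rcases Nat.lt_or_ge P.card 2 with hlt | hge
    · have hmono : span ℤ (v '' P) ⊔ scaledLattice ((q : ℤ) ^ L) ≤
          span ℤ (v '' ↑(insert a P)) ⊔ scaledLattice ((q : ℤ) ^ L) :=
        sup_le_sup_right (span_mono (Set.image_mono (by simp))) _
      refine ⟨insert a P, Finset.insert_subset_insert _ hPT,
        (Finset.card_insert_le _ _).trans (by omega), fun k hk => ?_⟩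
      rcases Finset.mem_insert.1 hk with rfl | hk
      · exact mem_sup_left (subset_span ⟨k, by simp, rfl⟩)
      · exact hmono (hspan k hk)
    obtain ⟨i, l, -, rfl⟩ := Finset.card_eq_two.1 (le_antisymm hcard hge)
    have himg (x y : ι) : v '' ↑({x, y} : Finset ι) = {v x, v y} := by simp [Set.image_pair]
    have hsub (x : ι) (hx : x ∈ T) : ({x, a} : Finset ι) ⊆ insert a T :=
      Finset.insert_subset (Finset.mem_insert_of_mem hx)
        (Finset.singleton_subset_iff.2 (Finset.mem_insert_self a T))
    simp only [himg] at hspan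
    have hleft (x y : ι) : v x ∈ span ℤ {v x, v y} ⊔ scaledLattice ((q : ℤ) ^ L) :=
      mem_sup_left (subset_span (by simp))
    have hright (x y : ι) : v y ∈ span ℤ {v x, v y} ⊔ scaledLattice ((q : ℤ) ^ L) :=
      mem_sup_left (subset_span (by simp))
    rcases mem_span_pair_sup_or_or hq L (v i) (v l) (v a) with h | h | h
    · refine ⟨{i, l}, hPT.trans (Finset.subset_insert _ _), hcard, fun k hk => ?_⟩
      rw [himg]
      rcases Finset.mem_insert.1 hk with rfl | hk
      exacts [h, hspan k hk]
    · refine ⟨{i, a}, hsub i (hPT (by simp)), Finset.card_le_two, fun k hk => ?_⟩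
      rw [himg]
      rcases Finset.mem_insert.1 hk with rfl | hk
      exacts [hright _ _, span_pair_sup_le (hleft _ _) h (hspan k hk)]
    · refine ⟨{l, a}, hsub l (hPT (by simp)), Finset.card_le_two, fun k hk => ?_⟩
      rw [himg]
      rcases Finset.mem_insert.1 hk with rfl | hk
      exacts [hright _ _, span_pair_sup_le h (hleft _ _) (hspan k hk)]

end PrimePower

open Multiplicative in
theorem exists_apply_ofAdd_eq_pow_sum {κ : Type*} [Fintype κ] [DecidableEq κ] {M : ℕ} [NeZero M]
    {ζ : ℂ} (hζ : IsPrimitiveRoot ζ M) (φ : Multiplicative (κ → ZMod M) →* ℂˣ) :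
    ∃ c : κ → ℕ, ∀ u : κ → ZMod M, (φ (ofAdd u) : ℂ) = ζ ^ ∑ k, c k * (u k).val := by
  have hroot (k : κ) : ∃ i : ℕ, ζ ^ i = φ (ofAdd (Pi.single k 1)) := by
    obtain ⟨i, -, hi⟩ := hζ.eq_pow_of_pow_eq_one (ξ := (φ (ofAdd (Pi.single k 1)) : ℂ)) (by
      rw [← Units.val_pow_eq_pow_val, ← map_pow, ← ofAdd_nsmul, ← Pi.single_smul,
        nsmul_eq_mul, mul_one, ZMod.natCast_self, Pi.single_zero, ofAdd_zero, map_one,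
        Units.val_one])
    exact ⟨i, hi⟩
  choose c hc using hroot
  refine ⟨c, fun u => ?_⟩
  have hdecomp : ofAdd u = ∏ k, ofAdd (Pi.single k (1 : ZMod M)) ^ (u k).val := by
    simp_rw [← ofAdd_nsmul, ← ofAdd_sum, ← Pi.single_smul, nsmul_eq_mul, mul_one,
      ZMod.natCast_zmod_val, Finset.univ_sum_single]
  rw [hdecomp, map_prod, Units.coe_prod, ← Finset.prod_pow_eq_pow_sum]
  simp_rw [map_pow, Units.val_pow_eq_pow_val, ← hc, pow_mul]

-- Characters of `(ℤ/M)^κ` detect membership in the subgroup generated by `A` and `B`, and each of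
-- them is `u ↦ ζ ^ (c ⬝ u)` for an integer vector `c`.
theorem exists_int_combination_of_forall_dvd {κ : Type*} [Fintype κ] {M : ℕ} (hM : 0 < M)
    (A B t : κ → ℤ)
    (h : ∀ c : κ → ℤ, (M : ℤ) ∣ ∑ k, c k * A k → (M : ℤ) ∣ ∑ k, c k * B k →
      (M : ℤ) ∣ ∑ k, c k * t k) :
    ∃ a b : ℤ, ∀ k, (M : ℤ) ∣ t k - (a * A k + b * B k) := by
  classical
  have : NeZero M := ⟨hM.ne'⟩
  let cast : (κ → ℤ) → Multiplicative (κ → ZMod M) := fun u => .ofAdd fun k => (u k : ZMod M)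
  have hζ := Complex.isPrimitiveRoot_exp M hM.ne'
  have : NeZero ((Monoid.exponent (Multiplicative (κ → ZMod M)) : ℕ) : ℂ) :=
    ⟨Nat.cast_ne_zero.2 Monoid.exponent_ne_zero_of_finite⟩
  have hmem : cast t ∈ Subgroup.closure {cast A, cast B} := by
    rw [← CommGroup.forall_monoidHom_apply_eq_one_iff ℂ]
    intro φ hφ
    obtain ⟨c, hc⟩ := exists_apply_ofAdd_eq_pow_sum hζ φ
    have key : ∀ u : κ → ℤ, φ (cast u) = 1 ↔ (M : ℤ) ∣ ∑ k, (c k : ℤ) * u k := by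
      intro u
      rw [← Units.val_eq_one, hc, hζ.pow_eq_one_iff_dvd, ← ZMod.natCast_eq_zero_iff,
        ← ZMod.intCast_zmod_eq_zero_iff_dvd]
      push_cast
      simp
    rw [key]
    exact h _ ((key A).1 (hφ _ (Subgroup.subset_closure (by simp))))
      ((key B).1 (hφ _ (Subgroup.subset_closure (by simp))))
  obtain ⟨a, b, hab⟩ := Subgroup.mem_closure_pair.1 hmem
  refine ⟨a, b, fun k => ?_⟩
  have := congrFun (congrArg Multiplicative.toAdd hab) k
  rw [← ZMod.intCast_eq_intCast_iff_dvd_sub]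
  simpa [cast] using this

section Closure

variable {ι : Type*} (M : ℕ) (w : ι → (ℤ × ℤ) × ℤ)

-- `ρ` is the least positive coefficient of `(w j).1` in a relation modulo `M` with the `(w k).1`,
-- `k ∈ P`, and some relation with that leading coefficient also holds modulo `M` for the second
-- components: the minimal invariant monomial in the variables `{j} ∪ P` takes equal values.
def HasMinimalRelation (j : ι) (P : Finset ι) : Prop :=
  ∃ ρ : ℕ, IsLeast {s : ℕ | 0 < s ∧
      (s : ℤ) • (w j).1 ∈ span ℤ ((Prod.fst ∘ w) '' P) ⊔ scaledLattice M} ρ ∧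
    ∃ r ∈ span ℤ (w '' P), ((ρ : ℤ) • w j + r).1 ∈ scaledLattice M ∧
      (M : ℤ) ∣ ((ρ : ℤ) • w j + r).2

variable {M w}

-- Reducing coefficients modulo `M` shows that minimality over natural coefficients, as in the
-- definition of the monomial map, is minimality over integer ones.
theorem hasMinimalRelation_of_forall_nat (hM : 0 < M) {j : ι} {P : Finset ι} {ρ : ℕ} (e : ι → ℕ)
    (hρ : 0 < ρ)
    (he : (ρ : ℤ) • (w j).1 + ∑ k ∈ P, (e k : ℤ) • (w k).1 ∈ scaledLattice M)
    (ht : (M : ℤ) ∣ ρ * (w j).2 + ∑ k ∈ P, (e k : ℤ) * (w k).2)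
    (hmin : ∀ s : ℕ, 0 < s → ∀ f : ι → ℕ,
      (s : ℤ) • (w j).1 + ∑ k ∈ P, (f k : ℤ) • (w k).1 ∈ scaledLattice M → ρ ≤ s) :
    HasMinimalRelation M w j P := by
  have hspan (c : ι → ℤ) : ∑ k ∈ P, c k • (w k).1 ∈ span ℤ ((Prod.fst ∘ w) '' P) :=
    (mem_span_image_finset_iff_exists_fun' ℤ).2 ⟨c, rfl⟩
  refine ⟨ρ, ⟨⟨hρ, ?_⟩, fun s ⟨hs, hsmem⟩ => ?_⟩, ∑ k ∈ P, (e k : ℤ) • w k,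
    sum_mem fun k hk => smul_mem _ _ (subset_span ⟨k, hk, rfl⟩), ?_, ?_⟩
  · rw [← add_sub_cancel_right ((ρ : ℤ) • (w j).1) (∑ k ∈ P, (e k : ℤ) • (w k).1)]
    exact sub_mem (mem_sup_right he) (mem_sup_left (hspan _))
  · obtain ⟨y, hy, l, hl, hyl⟩ := mem_sup.1 hsmem
    obtain ⟨c, rfl⟩ := (mem_span_image_finset_iff_exists_fun' ℤ).1 hy
    refine hmin s hs (fun k => (-c k % M).toNat) ?_
    have hred (k : ι) : ((-c k % M).toNat : ℤ) + c k = M * -(-c k / M) := by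
      rw [Int.toNat_of_nonneg (Int.emod_nonneg _ (by omega)), Int.emod_def]
      ring
    have hsum : ∑ k ∈ P, c k • (Prod.fst ∘ w) k + l + ∑ k ∈ P, ((-c k % M).toNat : ℤ) • (w k).1
        = l + ∑ k ∈ P, ((M : ℤ) * -(-c k / M)) • (w k).1 := by
      simp_rw [← hred, add_smul, Finset.sum_add_distrib, Function.comp_apply]
      abel
    rw [← hyl, hsum]
    exact add_mem hl (sum_mem fun k _ => mul_smul_mem_scaledLattice _ _ _)
  · simpa only [Prod.fst_add, Prod.smul_fst, Prod.fst_sum] using he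
  · simpa only [Prod.snd_add, Prod.smul_snd, Prod.snd_sum, smul_eq_mul] using ht

theorem hasMinimalRelation_of_card_le_two [LinearOrder ι] {S : Finset ι}
    (h₀ : ∀ j ∈ S, HasMinimalRelation M w j ∅)
    (h₁ : ∀ j ∈ S, ∀ i ∈ S, j < i → HasMinimalRelation M w j {i})
    (h₂ : ∀ j ∈ S, ∀ i ∈ S, ∀ l ∈ S, j < i → i < l → HasMinimalRelation M w j {i, l}) :
    ∀ j ∈ S, ∀ P ⊆ S, (∀ k ∈ P, j < k) → P.card ≤ 2 → HasMinimalRelation M w j P := by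
  intro j hj P hPS hjP hcard
  interval_cases h : P.card
  · rw [Finset.card_eq_zero.1 h]
    exact h₀ j hj
  · obtain ⟨i, rfl⟩ := Finset.card_eq_one.1 h
    exact h₁ j hj i (hPS (by simp)) (hjP i (by simp))
  · obtain ⟨i, l, hil, rfl⟩ := Finset.card_eq_two.1 h
    rcases hil.lt_or_gt with hil | hli
    · exact h₂ j hj i (hPS (by simp)) l (hPS (by simp)) (hjP i (by simp)) hil
    · rw [Finset.pair_comm]
      exact h₂ j hj l (hPS (by simp)) i (hPS (by simp)) (hjP l (by simp)) hli

theorem fst_mem_span_image {T : Set ι} {p : (ℤ × ℤ) × ℤ} (hp : p ∈ span ℤ (w '' T)) :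
    p.1 ∈ span ℤ ((Prod.fst ∘ w) '' T) := by
  have := mem_map_of_mem (f := LinearMap.fst ℤ (ℤ × ℤ) ℤ) hp
  rwa [map_span, ← Set.image_comp] at this

theorem HasMinimalRelation.exists_relation {j : ι} {P : Finset ι} (h : HasMinimalRelation M w j P)
    {Q R : ℕ} (hM : Q * R = M) (hQR : Q.Coprime R) {c : ℤ}
    (hc : c • (w j).1 ∈ span ℤ ((Prod.fst ∘ w) '' P) ⊔ scaledLattice Q) :
    ∃ r ∈ span ℤ (w '' P), (c • w j + r).1 ∈ scaledLattice Q ∧ (Q : ℤ) ∣ (c • w j + r).2 := by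
  obtain ⟨ρ, hρ, r, hr, hr₁, hr₂⟩ := h
  have hρc : (ρ : ℤ) ∣ R * c := by
    refine dvd_of_isLeast_smul_mem hρ ?_
    rw [mul_smul, ← hM]
    exact_mod_cast smul_mem_sup_scaledLattice_mul (R : ℤ) hc
  obtain ⟨κ, y, rfl⟩ := exists_eq_mul_add_mul_of_dvd_mul (Nat.isCoprime_iff_coprime.2 hQR) hρc
  have hQM : (Q : ℤ) ∣ M := ⟨R, by rw [← hM]; push_cast; ring⟩
  have hrel : (κ * ρ + y * Q) • w j + κ • r = κ • ((ρ : ℤ) • w j + r) + (Q * y) • w j := by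
    module
  refine ⟨κ • r, smul_mem _ _ hr, ?_, ?_⟩ <;> rw [hrel]
  · exact add_mem (smul_mem _ _ (scaledLattice_mono hQM hr₁)) (mul_smul_mem_scaledLattice _ _ _)
  · simp only [Prod.snd_add, Prod.smul_snd, smul_eq_mul, mul_assoc]
    exact dvd_add (dvd_mul_of_dvd_right (hQM.trans hr₂) _) (dvd_mul_right _ _)

-- Induction on `T`, adding its least element `j`: modulo `Q` the first components of `w` on the
-- rest of `T` are spanned by those on at most two indices `P`, so the minimal relation for
-- `(j, P)` removes the coefficient of `w j`.
theorem dvd_of_mem_span_of_prime_pow [LinearOrder ι] {S : Finset ι} {q L R : ℕ} (hq : q.Prime)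
    (hM : q ^ L * R = M) (hqR : (q ^ L).Coprime R)
    (hmin : ∀ j ∈ S, ∀ P ⊆ S, (∀ k ∈ P, j < k) → P.card ≤ 2 → HasMinimalRelation M w j P)
    {T : Finset ι} (hT : T ⊆ S) {p : (ℤ × ℤ) × ℤ} (hp : p ∈ span ℤ (w '' T))
    (hp₁ : p.1 ∈ scaledLattice ((q ^ L : ℕ) : ℤ)) : ((q ^ L : ℕ) : ℤ) ∣ p.2 := by
  classical
  induction T using Finset.induction_on_min generalizing p with
  | empty => simp_all
  | insert j T hjT ih =>
    rw [Finset.coe_insert, Set.image_insert_eq, mem_span_insert] at hp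
    obtain ⟨c, p', hp', rfl⟩ := hp
    have hTS : T ⊆ S := (Finset.subset_insert _ _).trans hT
    obtain ⟨P, hPT, hcard, hspan⟩ :=
      exists_subset_card_le_two_mem_span_sup hq L (Prod.fst ∘ w) T
    have hle : span ℤ ((Prod.fst ∘ w) '' T) ≤
        span ℤ ((Prod.fst ∘ w) '' P) ⊔ scaledLattice ((q ^ L : ℕ) : ℤ) :=
      span_le.2 (by rintro _ ⟨k, hk, rfl⟩; exact_mod_cast hspan k hk)
    have hc : c • (w j).1 ∈ span ℤ ((Prod.fst ∘ w) '' P) ⊔ scaledLattice ((q ^ L : ℕ) : ℤ) := by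
      have : c • (w j).1 = (c • w j + p').1 - p'.1 := by simp
      exact this ▸ sub_mem (mem_sup_right hp₁) (hle (fst_mem_span_image hp'))
    obtain ⟨r, hr, hr₁, hr₂⟩ := (hmin j (hT (Finset.mem_insert_self _ _)) P (hPT.trans hTS)
      (fun k hk => hjT k (hPT hk)) hcard).exists_relation hM hqR hc
    have hrest := ih hTS (p := p' - r) (sub_mem hp' (span_mono (Set.image_mono hPT) hr)) (by
      have : (p' - r).1 = (c • w j + p').1 - (c • w j + r).1 := by simp
      exact this ▸ sub_mem hp₁ hr₁)
    have : (c • w j + p').2 = (c • w j + r).2 + (p' - r).2 := by simp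
    exact this ▸ dvd_add hr₂ hrest

theorem dvd_of_mem_span [LinearOrder ι] {S : Finset ι} (hM : 0 < M)
    (hmin : ∀ j ∈ S, ∀ P ⊆ S, (∀ k ∈ P, j < k) → P.card ≤ 2 → HasMinimalRelation M w j P)
    {p : (ℤ × ℤ) × ℤ} (hp : p ∈ span ℤ (w '' S)) (hp₁ : p.1 ∈ scaledLattice M) :
    (M : ℤ) ∣ p.2 := by
  rw [Int.natCast_dvd, Nat.dvd_iff_prime_pow_dvd_dvd]
  intro q k hq hqk
  have hk : q ^ k ∣ q ^ M.factorization q :=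
    pow_dvd_pow q ((hq.pow_dvd_iff_le_factorization hM.ne').1 hqk)
  have hQM : ((q ^ M.factorization q : ℕ) : ℤ) ∣ M := by exact_mod_cast Nat.ordProj_dvd M q
  have := dvd_of_mem_span_of_prime_pow hq (Nat.ordProj_mul_ordCompl_eq_self M q)
    ((Nat.coprime_ordCompl hq hM.ne').pow_left _) hmin subset_rfl hp (scaledLattice_mono hQM hp₁)
  exact hk.trans (Int.natCast_dvd.1 (by exact_mod_cast this))

theorem exists_int_combination_of_hasMinimalRelation [LinearOrder ι] {S : Finset ι} (hM : 0 < M)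
    (hmin : ∀ j ∈ S, ∀ P ⊆ S, (∀ k ∈ P, j < k) → P.card ≤ 2 → HasMinimalRelation M w j P) :
    ∃ a b : ℤ, ∀ k ∈ S, (M : ℤ) ∣ (w k).2 - (a * (w k).1.1 + b * (w k).1.2) := by
  obtain ⟨a, b, hab⟩ := exists_int_combination_of_forall_dvd hM (fun k : S => (w k).1.1)
    (fun k : S => (w k).1.2) (fun k : S => (w k).2) fun c hA hB => by
      have hp : ∑ k : S, c k • w k ∈ span ℤ (w '' S) :=
        sum_mem fun k _ => smul_mem _ _ (subset_span ⟨k, k.2, rfl⟩)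
      simpa [Prod.snd_sum] using dvd_of_mem_span hM hmin hp
        (mem_scaledLattice.2 ⟨by simpa [Prod.fst_sum] using hA,
          by simpa [Prod.fst_sum, Prod.snd_sum] using hB⟩)
  exact ⟨a, b, fun k hk => hab ⟨k, hk⟩⟩

end Closure

theorem eq_of_pow_eq_mul_pow {ι : Type*} [Fintype ι] {a b : ι → ℝ} (ha : ∀ k, 0 ≤ a k)
    (hb : ∀ k, 0 ≤ b k) {c : ℝ} (hc : 0 < c) {e : ι → ℕ} (he : ∀ k, e k ≠ 0)
    (h : ∀ k, a k ^ e k = c * b k ^ e k) (hsum : ∑ k, a k ^ 2 = ∑ k, b k ^ 2) : a = b := by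
  wlog hc₁ : c ≤ 1 generalizing a b c
  · refine (this hb ha (inv_pos.2 hc) (fun k => ?_) hsum.symm
      (inv_le_one_of_one_le₀ (le_of_not_ge hc₁))).symm
    rw [h k, inv_mul_cancel_left₀ hc.ne']
  have hle (k : ι) : a k ≤ b k := (pow_le_pow_iff_left₀ (ha k) (hb k) (he k)).1
    (h k ▸ mul_le_of_le_one_left (pow_nonneg (hb k) _) hc₁)
  have hsq := (Finset.sum_eq_sum_iff_of_le fun k _ => pow_le_pow_left₀ (ha k) (hle k) 2).1 hsum
  funext k
  exact (pow_left_inj₀ (ha k) (hb k) two_ne_zero).1 (hsq k (Finset.mem_univ k))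

theorem eq_one_of_pow_eq_mul_pow {ι : Type*} [Fintype ι] {x y : EuclideanSpace ℂ ι}
    (hx : ‖x‖ = 1) (hy : ‖y‖ = 1) {c : ℝ} (hc : 0 < c) {e : ι → ℕ} (he : ∀ k, e k ≠ 0)
    (h : ∀ k, x k ^ e k = (c : ℂ) * y k ^ e k) : c = 1 := by
  have hsq (z : EuclideanSpace ℂ ι) (hz : ‖z‖ = 1) : ∑ k, ‖z k‖ ^ 2 = 1 := by
    rwa [EuclideanSpace.norm_eq, Real.sqrt_eq_one] at hz
  have hnorm (k : ι) : ‖x k‖ ^ e k = c * ‖y k‖ ^ e k := by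
    simpa [norm_pow, Complex.norm_real, abs_of_pos hc] using congrArg norm (h k)
  have hxy := eq_of_pow_eq_mul_pow (fun k => norm_nonneg (x k)) (fun k => norm_nonneg (y k)) hc he
    hnorm ((hsq x hx).trans (hsq y hy).symm)
  obtain ⟨k, hk⟩ : ∃ k, y k ≠ 0 := by
    by_contra! h0
    simpa [h0] using hsq y hy
  have := hnorm k
  rw [congrFun hxy k] at this
  exact (mul_left_eq_self₀.1 this.symm).resolve_right (pow_ne_zero _ (norm_ne_zero_iff.2 hk))

theorem exists_eq_pow_mul_of_pow_eq {M e : ℕ} [NeZero M] {ζ : ℂ} (hζ : IsPrimitiveRoot ζ M)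
    (he : e ∣ M) {x y : ℂ} (h : x ^ e = y ^ e) : ∃ t : ℕ, x = ζ ^ t * y := by
  by_cases hy : y = 0
  · have he₀ : e ≠ 0 := by
      rintro rfl
      exact NeZero.ne M (zero_dvd_iff.1 he)
    exact ⟨0, by simpa [hy, he₀] using h⟩
  obtain ⟨t, -, ht⟩ := hζ.eq_pow_of_pow_eq_one (ξ := x / y) (by
    obtain ⟨c, rfl⟩ := he
    rw [pow_mul, div_pow, h, div_self (pow_ne_zero _ hy), one_pow])
  exact ⟨t, by rw [ht, div_mul_cancel₀ _ hy]⟩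

theorem dvd_of_pow_mul_eq_self {M : ℕ} {ζ : ℂ} (hζ : IsPrimitiveRoot ζ M) {E : ℕ} {Y : ℂ}
    (hY : Y ≠ 0) (h : ζ ^ E * Y = Y) : (M : ℤ) ∣ E :=
  Int.natCast_dvd_natCast.2 ((hζ.pow_eq_one_iff_dvd E).1 ((mul_left_eq_self₀.1 h).resolve_right hY))

section MonomialMap

variable {ι : Type*} {n m : ℕ}

theorem mk_mul_mem_scaledLattice_iff (hn : 0 < n) (hm : 0 < m) {X Y : ℤ} :
    ((m : ℤ) * X, (n : ℤ) * Y) ∈ scaledLattice ((n * m : ℕ) : ℤ) ↔ (n : ℤ) ∣ X ∧ (m : ℤ) ∣ Y := by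
  have hm' : (m : ℤ) ≠ 0 := by exact_mod_cast hm.ne'
  have hn' : (n : ℤ) ≠ 0 := by exact_mod_cast hn.ne'
  rw [mem_scaledLattice, Nat.cast_mul]
  dsimp only
  rw [mul_comm (m : ℤ) X, mul_dvd_mul_iff_right hm', mul_dvd_mul_iff_left hn']

theorem dvd_mul_of_isLeast (hn : 0 < n) (hm : 0 < m) {a b : ℤ} {e : ℕ}
    (he : IsLeast {s : ℕ | 0 < s ∧ (n : ℤ) ∣ s * a ∧ (m : ℤ) ∣ s * b} e) : e ∣ n * m := by
  have hset (s : ℤ) : s • ((m : ℤ) * a, (n : ℤ) * b) = ((m : ℤ) * (s * a), (n : ℤ) * (s * b)) := by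
    ext <;> simp <;> ring
  have he' : IsLeast {s : ℕ | 0 < s ∧
      (s : ℤ) • ((m : ℤ) * a, (n : ℤ) * b) ∈ scaledLattice ((n * m : ℕ) : ℤ)} e := by
    simpa only [hset, mk_mul_mem_scaledLattice_iff hn hm] using he
  exact_mod_cast dvd_of_isLeast_smul_mem he' (z := ((n * m : ℕ) : ℤ))
    (mem_scaledLattice.2 ⟨dvd_mul_right _ _, dvd_mul_right _ _⟩)

-- `(w k).1 = (m α_k, n β_k)` encodes the character by which `ℤ_n × ℤ_m` acts on coordinate `k`,
-- as a vector of exponents of a primitive `nm`-th root of unity `ζ`; `t k` is the exponent with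
-- `x k = ζ ^ t k * y k`.
def weight (n m : ℕ) (α β : ι → ℤ) (t : ι → ℕ) (k : ι) : (ℤ × ℤ) × ℤ :=
  ((m * α k, n * β k), t k)

variable {α β : ι → ℤ} {t : ι → ℕ}

theorem smul_weight_add_sum_mem_iff (hn : 0 < n) (hm : 0 < m) (s : ℤ) (j : ι) (P : Finset ι)
    (c : ι → ℤ) :
    s • (weight n m α β t j).1 + ∑ k ∈ P, c k • (weight n m α β t k).1 ∈
        scaledLattice ((n * m : ℕ) : ℤ) ↔
      (n : ℤ) ∣ s * α j + ∑ k ∈ P, c k * α k ∧ (m : ℤ) ∣ s * β j + ∑ k ∈ P, c k * β k := by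
  rw [← mk_mul_mem_scaledLattice_iff hn hm]
  congr! 1
  ext <;> simp [weight, Prod.fst_sum, Prod.snd_sum, Finset.mul_sum, mul_add] <;>
    exact congrArg₂ (· + ·) (mul_left_comm _ _ _)
      (Finset.sum_congr rfl fun k _ => mul_left_comm _ _ _)

theorem exp_eq_pow_of_dvd (hn : 0 < n) (hm : 0 < m) {a b A B : ℤ} {s : ℕ}
    (h : ((n * m : ℕ) : ℤ) ∣ s - (a * (m * A) + b * (n * B))) :
    Complex.exp (2 * Real.pi * Complex.I * (((a * A : ℤ) : ℂ) / n + ((b * B : ℤ) : ℂ) / m)) =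
      Complex.exp (2 * Real.pi * Complex.I / (n * m : ℕ)) ^ s := by
  obtain ⟨z, hz⟩ := h
  push_cast at hz
  have hs : (s : ℂ) = a * m * A + b * n * B + n * m * z := by
    exact_mod_cast (by linear_combination hz : (s : ℤ) = a * m * A + b * n * B + n * m * z)
  have hn' : (n : ℂ) ≠ 0 := by exact_mod_cast hn.ne'
  have hm' : (m : ℂ) ≠ 0 := by exact_mod_cast hm.ne'
  rw [← Complex.exp_nat_mul, Complex.exp_eq_exp_iff_exists_int]
  refine ⟨-z, ?_⟩
  rw [hs]
  push_cast
  field_simp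
  ring

variable {ζ : ℂ} {x y : ι → ℂ} (hn : 0 < n) (hm : 0 < m) (hζ : IsPrimitiveRoot ζ (n * m))
  (ht : ∀ k, x k = ζ ^ t k * y k)
include hn hm hζ ht

theorem hasMinimalRelation_weight_empty {j : ι} (hy : y j ≠ 0) {e : ℕ}
    (he : IsLeast {s : ℕ | 0 < s ∧ (n : ℤ) ∣ s * α j ∧ (m : ℤ) ∣ s * β j} e)
    (h : x j ^ e = y j ^ e) : HasMinimalRelation (n * m) (weight n m α β t) j ∅ := by
  have hdvd := dvd_of_pow_mul_eq_self hζ (pow_ne_zero e hy) (E := e * t j) (by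
    conv_rhs => rw [← h, ht j]
    ring)
  refine hasMinimalRelation_of_forall_nat (Nat.mul_pos hn hm) 0 he.1.1 ?_
    (by simpa [weight] using hdvd) fun s hs f hsf => he.2 ⟨hs, ?_⟩
  · exact (smul_weight_add_sum_mem_iff hn hm _ j ∅ _).2 (by simpa using he.1.2)
  · simpa using (smul_weight_add_sum_mem_iff hn hm _ j ∅ _).1 hsf

theorem hasMinimalRelation_weight_singleton {j i : ι} (hyj : y j ≠ 0) (hyi : y i ≠ 0) {a b : ℕ}
    (hab : (0 < a ∧ (n : ℤ) ∣ a * α j + b * α i ∧ (m : ℤ) ∣ a * β j + b * β i) ∧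
      ∀ s u : ℕ, 0 < s → (n : ℤ) ∣ s * α j + u * α i → (m : ℤ) ∣ s * β j + u * β i → a ≤ s)
    (h : x j ^ a * x i ^ b = y j ^ a * y i ^ b) :
    HasMinimalRelation (n * m) (weight n m α β t) j {i} := by
  have hdvd := dvd_of_pow_mul_eq_self hζ (mul_ne_zero (pow_ne_zero a hyj) (pow_ne_zero b hyi))
    (E := a * t j + b * t i) (by
      conv_rhs => rw [← h, ht j, ht i]
      ring)
  refine hasMinimalRelation_of_forall_nat (Nat.mul_pos hn hm) (fun _ => b) hab.1.1 ?_
    (by simpa [weight] using hdvd) fun s hs f hsf => hab.2 s (f i) hs ?_ ?_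
  · exact (smul_weight_add_sum_mem_iff hn hm _ j {i} _).2 (by simpa using hab.1.2)
  · simpa using ((smul_weight_add_sum_mem_iff hn hm _ j {i} _).1 hsf).1
  · simpa using ((smul_weight_add_sum_mem_iff hn hm _ j {i} _).1 hsf).2

theorem hasMinimalRelation_weight_pair [DecidableEq ι] {j i l : ι} (hil : i ≠ l) (hyj : y j ≠ 0)
    (hyi : y i ≠ 0) (hyl : y l ≠ 0) {c d e : ℕ}
    (hcde : (0 < c ∧ (n : ℤ) ∣ c * α j + d * α i + e * α l ∧
        (m : ℤ) ∣ c * β j + d * β i + e * β l) ∧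
      ∀ s u v : ℕ, 0 < s → (n : ℤ) ∣ s * α j + u * α i + v * α l →
        (m : ℤ) ∣ s * β j + u * β i + v * β l → c ≤ s)
    (h : x j ^ c * x i ^ d * x l ^ e = y j ^ c * y i ^ d * y l ^ e) :
    HasMinimalRelation (n * m) (weight n m α β t) j {i, l} := by
  have hdvd := dvd_of_pow_mul_eq_self hζ
    (mul_ne_zero (mul_ne_zero (pow_ne_zero c hyj) (pow_ne_zero d hyi)) (pow_ne_zero e hyl))
    (E := c * t j + d * t i + e * t l) (by
      conv_rhs => rw [← h, ht j, ht i, ht l]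
      ring)
  refine hasMinimalRelation_of_forall_nat (Nat.mul_pos hn hm) (fun k => if k = i then d else e)
    hcde.1.1 ?_ ?_ fun s hs f hsf => hcde.2 s (f i) (f l) hs ?_ ?_
  · refine (smul_weight_add_sum_mem_iff hn hm _ j {i, l} _).2 ?_
    simpa [Finset.sum_pair hil, hil.symm, add_assoc] using hcde.1.2
  · simpa [weight, Finset.sum_pair hil, hil.symm, add_assoc] using hdvd
  · simpa [Finset.sum_pair hil, add_assoc] using
      ((smul_weight_add_sum_mem_iff hn hm _ j {i, l} _).1 hsf).1
  · simpa [Finset.sum_pair hil, add_assoc] using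
      ((smul_weight_add_sum_mem_iff hn hm _ j {i, l} _).1 hsf).2

end MonomialMap

end NonParallel

open NonParallel

/-- the monomial map `F_{ℤ_n×ℤ_m}` associated to the diagonal action of
`ℤ_n × ℤ_m` on `ℂ^N` (with minimal invariant exponents) satisfies the non-parallel
property: if `‖x‖ = ‖y‖ = 1` and `F(x) = λ F(y)` for some real `λ > 0`, then `x ∼ y`. -/
theorem stmt9 (n m N : ℕ) (hn : 0 < n) (hm : 0 < m) (α β : Fin N → ℤ)
    (mexp : Fin N → ℕ)
    (hmexp : ∀ k, IsLeast
      {t : ℕ | 0 < t ∧ (n : ℤ) ∣ t * α k ∧ (m : ℤ) ∣ t * β k} (mexp k))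
    (aexp bexp : Fin N → Fin N → ℕ)
    (hab : ∀ k₁ k₂, k₁ ≠ k₂ →
      (0 < aexp k₁ k₂ ∧
        (n : ℤ) ∣ aexp k₁ k₂ * α k₁ + bexp k₁ k₂ * α k₂ ∧
        (m : ℤ) ∣ aexp k₁ k₂ * β k₁ + bexp k₁ k₂ * β k₂) ∧
      ∀ t u : ℕ, 0 < t → (n : ℤ) ∣ t * α k₁ + u * α k₂ →
        (m : ℤ) ∣ t * β k₁ + u * β k₂ → aexp k₁ k₂ ≤ t)
    (cexp dexp eexp : Fin N → Fin N → Fin N → ℕ)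
    (hcde : ∀ k₁ k₂ k₃, k₁ ≠ k₂ → k₁ ≠ k₃ → k₂ ≠ k₃ →
      (0 < cexp k₁ k₂ k₃ ∧
        (n : ℤ) ∣ cexp k₁ k₂ k₃ * α k₁ + dexp k₁ k₂ k₃ * α k₂ + eexp k₁ k₂ k₃ * α k₃ ∧
        (m : ℤ) ∣ cexp k₁ k₂ k₃ * β k₁ + dexp k₁ k₂ k₃ * β k₂ + eexp k₁ k₂ k₃ * β k₃) ∧
      ∀ t u v : ℕ, 0 < t → (n : ℤ) ∣ t * α k₁ + u * α k₂ + v * α k₃ →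
        (m : ℤ) ∣ t * β k₁ + u * β k₂ + v * β k₃ → cexp k₁ k₂ k₃ ≤ t)
    (x y : EuclideanSpace ℂ (Fin N)) (hx : ‖x‖ = 1) (hy : ‖y‖ = 1)
    (lam : ℝ) (hlam : 0 < lam)
    (h1 : ∀ k, x k ^ mexp k = (lam : ℂ) * y k ^ mexp k)
    (h2 : ∀ k₁ k₂, k₁ < k₂ →
      x k₁ ^ aexp k₁ k₂ * x k₂ ^ bexp k₁ k₂ =
        (lam : ℂ) * (y k₁ ^ aexp k₁ k₂ * y k₂ ^ bexp k₁ k₂))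
    (h3 : ∀ k₁ k₂ k₃, k₁ < k₂ → k₂ < k₃ →
      x k₁ ^ cexp k₁ k₂ k₃ * x k₂ ^ dexp k₁ k₂ k₃ * x k₃ ^ eexp k₁ k₂ k₃ =
        (lam : ℂ) * (y k₁ ^ cexp k₁ k₂ k₃ * y k₂ ^ dexp k₁ k₂ k₃ * y k₃ ^ eexp k₁ k₂ k₃)) :
    ∃ a b : ℤ, x = zact n m α β a b y := by
  obtain rfl : lam = 1 := eq_one_of_pow_eq_mul_pow hx hy hlam (fun k => (hmexp k).1.1.ne') h1
  simp only [Complex.ofReal_one, one_mul] at h1 h2 h3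
  have hM : 0 < n * m := Nat.mul_pos hn hm
  have : NeZero (n * m) := ⟨hM.ne'⟩
  have hζ := Complex.isPrimitiveRoot_exp (n * m) hM.ne'
  choose t ht using fun k =>
    exists_eq_pow_mul_of_pow_eq hζ (dvd_mul_of_isLeast hn hm (hmexp k)) (h1 k)
  have hS {k : Fin N} (hk : k ∈ Finset.univ.filter (y · ≠ 0)) : y k ≠ 0 :=
    (Finset.mem_filter.1 hk).2
  obtain ⟨a, b, hcomb⟩ := exists_int_combination_of_hasMinimalRelation (w := weight n m α β t) hM
    (hasMinimalRelation_of_card_le_two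
      (fun j hj => hasMinimalRelation_weight_empty hn hm hζ ht (hS hj) (hmexp j) (h1 j))
      (fun j hj i hi hji => hasMinimalRelation_weight_singleton hn hm hζ ht (hS hj) (hS hi)
        (hab j i hji.ne) (h2 j i hji))
      (fun j hj i hi l hl hji hil => hasMinimalRelation_weight_pair hn hm hζ ht hil.ne (hS hj)
        (hS hi) (hS hl) (hcde j i l hji.ne (hji.trans hil).ne hil.ne) (h3 j i l hji hil)))
  refine ⟨a, b, ?_⟩
  ext k
  by_cases hk : y k = 0
  · simp [zact, ht k, hk]
  · rw [ht k]
    simp only [zact]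
    rw [exp_eq_pow_of_dvd hn hm (by simpa [weight] using hcomb k (by simpa using hk))]
end

section
/- Let a finite group G act on ℂ^N by diagonal unitary matrices, and let V be an invertible N×N integer matrix such that the Laurent monomial map z ↦ z^V is G-invariant and separates orbits of vectors with all entries nonzero (if all entries of z and w are nonzero and z^V = w^V then z ~ w). Let c = V^{-1}(1,…,1)ᵀ ∈ ℚ^N and Q(x) = Σ_{k=1}^N sign(c_k)|x_k|². If x, y ∈ ℂ^N have all entries nonzero, λ > 0 is real, Q(x) = Q(y), and λ·x^V = y^V, then x ~ y. -/
/-!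
With `c = V⁻¹ (1,…,1)ᵀ`, rescaling each coordinate `x_j` by `λ ^ c_j` multiplies `x^V` by `λ`,
so the rescaled vector has the same image as `y` and hence lies in the orbit of `y`. The action is
unitary, so `|y_k| = λ ^ c_k |x_k|` and `Q(y) - Q(x) = ∑ sign(c_k) (λ ^ (2 c_k) - 1) |x_k|²`. Every
summand has the sign of `log λ`, so `Q(x) = Q(y)` forces `λ ^ c_k = 1` for all `k`: the rescaling
was trivial.
-/

/-- The Laurent monomial map `z ↦ z^V` defined by an integer matrix `V`:
the `k`-th component is `∏_j z_j^{V k j}` (integer powers). -/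
noncomputable def monV {N : ℕ} (V : Matrix (Fin N) (Fin N) ℤ) (z : Fin N → ℂ) :
    Fin N → ℂ :=
  fun k => ∏ j, z j ^ V k j

/-- The vector `c = V⁻¹ (1,…,1)ᵀ ∈ ℚ^N`. -/
noncomputable def cvec {N : ℕ} (V : Matrix (Fin N) (Fin N) ℤ) : Fin N → ℚ :=
  (V.map (Int.cast : ℤ → ℚ))⁻¹.mulVec (fun _ => 1)

/-- The quadratic form `Q(x) = Σ_k sign(c_k) |x_k|²`. -/
noncomputable def Qform {N : ℕ} (V : Matrix (Fin N) (Fin N) ℤ) (x : Fin N → ℂ) : ℝ :=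
  ∑ k, Real.sign ((cvec V k : ℝ)) * ‖x k‖ ^ 2

namespace Real

theorem sign_mul (x y : ℝ) : sign (x * y) = sign x * sign y := by
  rcases lt_trichotomy x 0 with hx | hx | hx <;> rcases lt_trichotomy y 0 with hy | hy | hy <;>
    simp [sign_of_neg, sign_of_pos, hx, hy, mul_pos_of_neg_of_neg, mul_neg_of_neg_of_pos,
      mul_neg_of_pos_of_neg]

theorem sign_mul_self (x : ℝ) : sign x * x = |x| := by
  rcases lt_trichotomy x 0 with hx | rfl | hx
  · rw [sign_of_neg hx, abs_of_neg hx, neg_one_mul]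
  · simp
  · rw [sign_of_pos hx, abs_of_pos hx, one_mul]

theorem sign_exp_sub_one (x : ℝ) : sign (exp x - 1) = sign x := by
  rcases lt_trichotomy x 0 with hx | rfl | hx
  · rw [sign_of_neg hx, sign_of_neg (sub_neg.2 (exp_lt_one_iff.2 hx))]
  · simp
  · rw [sign_of_pos hx, sign_of_pos (sub_pos.2 (one_lt_exp_iff.2 hx))]

theorem sign_log_mul_sign_mul_rpow_sub_one {b : ℝ} (hb : 0 < b) (r : ℝ) :
    sign (log b) * (sign r * (b ^ r - 1)) = |b ^ r - 1| := by
  rw [← mul_assoc, ← sign_mul, ← sign_exp_sub_one, ← rpow_def_of_pos hb, sign_mul_self]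

end Real

theorem rpow_eq_one_of_sum_sign_mul_rpow_sub_one_eq_zero {ι : Type*} [Fintype ι] {b : ℝ}
    (hb : 0 < b) (c w : ι → ℝ) (hw : ∀ i, 0 < w i)
    (h : ∑ i, Real.sign (c i) * (b ^ c i - 1) * w i = 0) (i : ι) : b ^ c i = 1 := by
  have habs : ∑ i, |b ^ c i - 1| * w i = 0 := by
    simp_rw [← Real.sign_log_mul_sign_mul_rpow_sub_one hb, mul_assoc, ← Finset.mul_sum,
      ← mul_assoc, h, mul_zero]
  have hi := (Finset.sum_eq_zero_iff_of_nonneg fun j _ => by have := hw j; positivity).1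
    habs i (Finset.mem_univ i)
  rw [mul_eq_zero, abs_eq_zero, sub_eq_zero] at hi
  exact hi.resolve_right (hw i).ne'

section monV

variable {N : ℕ} (V : Matrix (Fin N) (Fin N) ℤ)

theorem monV_mul (a z : Fin N → ℂ) (k : Fin N) :
    monV V (fun j => a j * z j) k = monV V a k * monV V z k := by
  simp only [monV, mul_zpow, Finset.prod_mul_distrib]

theorem monV_ofReal_rpow {lam : ℝ} (hlam : 0 < lam) (c : Fin N → ℝ) (k : Fin N) :
    monV V (fun j => ((lam ^ c j : ℝ) : ℂ)) k = ((lam ^ ∑ j, c j * V k j : ℝ) : ℂ) := by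
  simp only [monV, ← Complex.ofReal_zpow, ← Complex.ofReal_prod, ← Real.rpow_intCast,
    ← Real.rpow_mul hlam.le, Real.rpow_sum_of_pos hlam]

theorem mulVec_cvec (hV : V.det ≠ 0) :
    (V.map (Int.cast : ℤ → ℚ)).mulVec (cvec V) = fun _ => 1 := by
  have hdet : IsUnit (V.map (Int.cast : ℤ → ℚ)).det := by
    rw [← Int.cast_det, isUnit_iff_ne_zero]
    exact_mod_cast hV
  rw [cvec, Matrix.mulVec_mulVec, Matrix.mul_nonsing_inv _ hdet, Matrix.one_mulVec]

theorem sum_cvec_mul_eq_one (hV : V.det ≠ 0) (k : Fin N) :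
    ∑ j, (cvec V j : ℝ) * V k j = 1 := by
  have h := congrFun (mulVec_cvec V hV) k
  simp only [Matrix.mulVec, dotProduct, Matrix.map_apply] at h
  exact_mod_cast (by simpa only [mul_comm] using h)

end monV

theorem stmt11_general (N : ℕ) (G : Type)
    (u : G → Fin N → ℂ)
    (huabs : ∀ g k, ‖u g k‖ = 1)
    (V : Matrix (Fin N) (Fin N) ℤ) (hV : V.det ≠ 0)
    (hsep : ∀ z w : Fin N → ℂ, (∀ k, z k ≠ 0) → (∀ k, w k ≠ 0) →
      monV V z = monV V w → ∃ g, z = fun k => u g k * w k)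
    (x y : Fin N → ℂ) (hx : ∀ k, x k ≠ 0) (hy : ∀ k, y k ≠ 0)
    (lam : ℝ) (hlam : 0 < lam)
    (hQ : Qform V x = Qform V y)
    (hmon : ∀ k, (lam : ℂ) * monV V x k = monV V y k) :
    ∃ g, x = fun k => u g k * y k := by
  set c : Fin N → ℝ := fun j => (cvec V j : ℝ)
  set x' : Fin N → ℂ := fun j => ((lam ^ c j : ℝ) : ℂ) * x j
  have hx' : ∀ k, x' k ≠ 0 := fun k =>
    mul_ne_zero (Complex.ofReal_ne_zero.2 (Real.rpow_pos_of_pos hlam _).ne') (hx k)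
  have hmon' : monV V x' = monV V y := by
    funext k
    rw [monV_mul, monV_ofReal_rpow V hlam, sum_cvec_mul_eq_one V hV, Real.rpow_one, hmon]
  obtain ⟨g, hg⟩ := hsep x' y hx' hy hmon'
  have hnorm : ∀ k, ‖y k‖ ^ 2 = (lam ^ 2) ^ c k * ‖x k‖ ^ 2 := fun k => by
    have := congrArg norm (congrFun hg k)
    simp only [x', norm_mul, huabs, one_mul, Complex.norm_real, Real.norm_eq_abs,
      abs_of_pos (Real.rpow_pos_of_pos hlam _)] at this
    rw [← this, mul_pow, Real.rpow_pow_comm hlam.le]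
  have hsum : ∑ k, Real.sign (c k) * ((lam ^ 2) ^ c k - 1) * ‖x k‖ ^ 2 = 0 := by
    rw [← sub_eq_zero_of_eq hQ.symm, Qform, Qform, ← Finset.sum_sub_distrib]
    exact Finset.sum_congr rfl fun k _ => by rw [hnorm]; ring
  have hone : ∀ k, lam ^ c k = 1 := fun k => by
    have := rpow_eq_one_of_sum_sign_mul_rpow_sub_one_eq_zero (by positivity) c _
      (fun k => by have := hx k; positivity) hsum k
    rwa [← Real.rpow_pow_comm hlam.le, pow_eq_one_iff_of_nonneg (by positivity) two_ne_zero]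
      at this
  refine ⟨g, funext fun k => ?_⟩
  simpa [x', hone] using congrFun hg k

/-- let a finite group `G` act on `ℂ^N` by diagonal unitary matrices
(`g` multiplies the `k`-th coordinate by the unimodular number `u g k`), and let `V` be
an invertible integer matrix such that `z ↦ z^V` is `G`-invariant and separates orbits
of vectors with all entries nonzero.  If `x, y` have all entries nonzero, `λ > 0`,
`Q(x) = Q(y)` and `λ x^V = y^V`, then `x ∼ y`. -/
theorem stmt11 (N : ℕ) (G : Type) [Group G] [Fintype G]
    (u : G → Fin N → ℂ)
    (huabs : ∀ g k, ‖u g k‖ = 1)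
    (huone : ∀ k, u 1 k = 1)
    (humul : ∀ g h k, u (g * h) k = u g k * u h k)
    (V : Matrix (Fin N) (Fin N) ℤ) (hV : V.det ≠ 0)
    (hGinv : ∀ g (z : Fin N → ℂ), (∀ k, z k ≠ 0) →
      monV V (fun k => u g k * z k) = monV V z)
    (hsep : ∀ z w : Fin N → ℂ, (∀ k, z k ≠ 0) → (∀ k, w k ≠ 0) →
      monV V z = monV V w → ∃ g, z = fun k => u g k * w k)
    (x y : Fin N → ℂ) (hx : ∀ k, x k ≠ 0) (hy : ∀ k, y k ≠ 0)
    (lam : ℝ) (hlam : 0 < lam)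
    (hQ : Qform V x = Qform V y)
    (hmon : ∀ k, (lam : ℂ) * monV V x k = monV V y k) :
    ∃ g, x = fun k => u g k * y k :=
  stmt11_general N G u huabs V hV hsep x y hx hy lam hlam hQ hmon
end

section
/- Let a finite group G act on ℂ^N by diagonal unitary matrices, and let V be an invertible N×N integer matrix such that z ↦ z^V is G-invariant and separates orbits of vectors with all entries nonzero. Let c = V^{-1}(1,…,1)ᵀ ∈ ℚ^N and Q(x) = Σ_{k=1}^N sign(c_k)|x_k|², and suppose there is at least one index k with c_k < 0. Define, for x with Q(x) ≠ 0, 𝒢(x) = (sign Q(x), √|Q(x)| · (x/√|Q(x)|)^V) ∈ {−1,1} × ℂ^N. If x, y ∈ ℂ^N have all entries nonzero, Q(x) ≠ 0, Q(y) ≠ 0, and 𝒢(x) = 𝒢(y), then x ~ y. -/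
/-- The map `𝒢(x) = (sign Q(x), √|Q(x)| · (x/√|Q(x)|)^V)`. -/
noncomputable def Gmap {N : ℕ} (V : Matrix (Fin N) (Fin N) ℤ) (x : Fin N → ℂ) :
    ℝ × (Fin N → ℂ) :=
  (Real.sign (Qform V x),
    fun k => ((Real.sqrt |Qform V x| : ℝ) : ℂ) *
      monV V (fun j => x j / ((Real.sqrt |Qform V x| : ℝ) : ℂ)) k)

/-!
Write `s = √|Q x|` and `t = √|Q y|`. Since `V c = 1`, scaling `z_j` by `μ ^ c_j` scales `z^V` by
`μ`; so `𝒢 x = 𝒢 y` says `(x / s)^V = ((t / s)^c · y / t)^V`, and orbit separation gives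
`x / s = g · (t / s)^c · y / t`. Both `x / s` and `y / t` have `Q = sign Q x = sign Q y`, and since
`G` acts unitarily, `Q (x / s) = Σ_k sign c_k (t / s)^(2 c_k) |y_k / t|²`. Every summand is monotone
in `t / s` and the one with `c_k < 0` strictly so, hence `t = s` and `x = g · y`.
-/

open Matrix

lemma map_intCast_mulVec_cvec {N : ℕ} {V : Matrix (Fin N) (Fin N) ℤ} (hV : V.det ≠ 0) :
    V.map (Int.cast : ℤ → ℚ) *ᵥ cvec V = fun _ => 1 := by
  have hdet : IsUnit (V.map (Int.cast : ℤ → ℚ)).det := by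
    rw [isUnit_iff_ne_zero]
    change ((Int.castRingHom ℚ).mapMatrix V).det ≠ 0
    rw [← RingHom.map_det, eq_intCast]
    exact_mod_cast hV
  rw [cvec, mulVec_mulVec, mul_nonsing_inv _ hdet, one_mulVec]

lemma sum_mul_cvec {N : ℕ} {V : Matrix (Fin N) (Fin N) ℤ} (hV : V.det ≠ 0) (k : Fin N) :
    ∑ j, (V k j : ℝ) * cvec V j = 1 := by
  have h := congrFun (map_intCast_mulVec_cvec hV) k
  simp only [mulVec, dotProduct, map_apply] at h
  exact_mod_cast h

lemma monV_rpow_mul {N : ℕ} (V : Matrix (Fin N) (Fin N) ℤ) {μ : ℝ} (hμ : 0 < μ)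
    (c : Fin N → ℝ) (z : Fin N → ℂ) (k : Fin N) :
    monV V (fun j => ((μ ^ c j : ℝ) : ℂ) * z j) k =
      ((μ ^ ∑ j, (V k j : ℝ) * c j : ℝ) : ℂ) * monV V z k := by
  simp only [monV, mul_zpow, Finset.prod_mul_distrib, Real.rpow_sum_of_pos hμ,
    Complex.ofReal_prod]
  congr 1
  refine Finset.prod_congr rfl fun j _ => ?_
  rw [← Complex.ofReal_zpow, ← Real.rpow_intCast, ← Real.rpow_mul hμ.le, mul_comm]

lemma monV_rpow_cvec_mul {N : ℕ} {V : Matrix (Fin N) (Fin N) ℤ} (hV : V.det ≠ 0)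
    {μ : ℝ} (hμ : 0 < μ) (z : Fin N → ℂ) :
    monV V (fun j => ((μ ^ (cvec V j : ℝ) : ℝ) : ℂ) * z j) = fun k => (μ : ℂ) * monV V z k := by
  funext k
  rw [monV_rpow_mul V hμ, sum_mul_cvec hV, Real.rpow_one]

lemma monV_eq_monV_rpow_cvec_mul {N : ℕ} {V : Matrix (Fin N) (Fin N) ℤ} (hV : V.det ≠ 0)
    {s t : ℝ} (hs : 0 < s) (ht : 0 < t) {z w : Fin N → ℂ}
    (h : ∀ k, (s : ℂ) * monV V z k = t * monV V w k) :
    monV V z = monV V (fun k => (((t / s) ^ (cvec V k : ℝ) : ℝ) : ℂ) * w k) := by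
  have hsC : (s : ℂ) ≠ 0 := by exact_mod_cast hs.ne'
  rw [monV_rpow_cvec_mul hV (div_pos ht hs)]
  funext k
  push_cast
  field_simp
  linear_combination h k

lemma Real.div_abs_self (a : ℝ) : a / |a| = Real.sign a := by
  rcases lt_trichotomy a 0 with h | rfl | h
  · rw [Real.sign_of_neg h, abs_of_neg h, div_neg, div_self h.ne]
  · simp
  · rw [Real.sign_of_pos h, abs_of_pos h, div_self h.ne']

lemma Qform_div {N : ℕ} (V : Matrix (Fin N) (Fin N) ℤ) (z : Fin N → ℂ) (a : ℂ) :
    Qform V (fun k => z k / a) = Qform V z / ‖a‖ ^ 2 := by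
  simp only [Qform, Finset.sum_div, norm_div, div_pow, mul_div_assoc]

lemma Qform_div_sqrt_abs {N : ℕ} (V : Matrix (Fin N) (Fin N) ℤ) (z : Fin N → ℂ) :
    Qform V (fun k => z k / (√|Qform V z| : ℂ)) = Real.sign (Qform V z) := by
  rw [Qform_div, Complex.norm_real, Real.norm_of_nonneg (Real.sqrt_nonneg _),
    Real.sq_sqrt (abs_nonneg _), Real.div_abs_self]

lemma Real.sign_mul_rpow_sq_lt {s t : ℝ} (hs : 0 < s) (hst : s < t) {c : ℝ} (hc : c ≠ 0) :
    Real.sign c * (s ^ c) ^ 2 < Real.sign c * (t ^ c) ^ 2 := by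
  rcases hc.lt_or_gt with hc | hc
  · have hts := Real.rpow_lt_rpow_of_neg hs hst hc
    rw [Real.sign_of_neg hc, neg_one_mul, neg_one_mul, neg_lt_neg_iff]
    gcongr
    exact (Real.rpow_pos_of_pos (hs.trans hst) c).le
  · have hst' := Real.rpow_lt_rpow hs.le hst hc
    rw [Real.sign_of_pos hc, one_mul, one_mul]
    gcongr

lemma Real.sign_mul_rpow_sq_le {s t : ℝ} (hs : 0 < s) (hst : s ≤ t) (c : ℝ) :
    Real.sign c * (s ^ c) ^ 2 ≤ Real.sign c * (t ^ c) ^ 2 := by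
  rcases eq_or_ne c 0 with rfl | hc
  · simp
  rcases hst.eq_or_lt with rfl | hst
  · rfl
  exact (Real.sign_mul_rpow_sq_lt hs hst hc).le

lemma strictMonoOn_sum_sign_mul_rpow_mul_sq {ι : Type*} [Fintype ι] (c r : ι → ℝ)
    (h : ∃ k, c k ≠ 0 ∧ r k ≠ 0) :
    StrictMonoOn (fun t : ℝ => ∑ k, Real.sign (c k) * (t ^ c k * r k) ^ 2) (Set.Ioi 0) := by
  intro s hs t _ hst
  obtain ⟨k₀, hc, hr⟩ := h
  simp only [mul_pow, ← mul_assoc]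
  refine Finset.sum_lt_sum (fun k _ => ?_) ⟨k₀, Finset.mem_univ _, ?_⟩
  · exact mul_le_mul_of_nonneg_right (Real.sign_mul_rpow_sq_le hs hst.le (c k)) (sq_nonneg _)
  · exact mul_lt_mul_of_pos_right (Real.sign_mul_rpow_sq_lt hs hst hc) (by positivity)

lemma eq_one_of_Qform_eq_of_norm_eq {N : ℕ} {V : Matrix (Fin N) (Fin N) ℤ} {z w : Fin N → ℂ}
    {μ : ℝ} (hμ : 0 < μ) (hzw : ∀ k, ‖z k‖ = μ ^ (cvec V k : ℝ) * ‖w k‖)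
    (hc : ∃ k, cvec V k ≠ 0 ∧ w k ≠ 0) (hQ : Qform V z = Qform V w) : μ = 1 := by
  have hmono := strictMonoOn_sum_sign_mul_rpow_mul_sq (fun k => (cvec V k : ℝ)) (fun k => ‖w k‖)
    (by simpa using hc)
  refine hmono.injOn hμ (Set.mem_Ioi.2 one_pos) ?_
  simpa only [Qform, hzw, Real.one_rpow, one_mul] using hQ

theorem stmt12_general (N : ℕ) (G : Type)
    (u : G → Fin N → ℂ)
    (huabs : ∀ g k, ‖u g k‖ = 1)
    (V : Matrix (Fin N) (Fin N) ℤ) (hV : V.det ≠ 0)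
    (hsep : ∀ z w : Fin N → ℂ, (∀ k, z k ≠ 0) → (∀ k, w k ≠ 0) →
      monV V z = monV V w → ∃ g, z = fun k => u g k * w k)
    (hneg : ∃ k, cvec V k < 0)
    (x y : Fin N → ℂ) (hx : ∀ k, x k ≠ 0) (hy : ∀ k, y k ≠ 0)
    (hQx : Qform V x ≠ 0) (hQy : Qform V y ≠ 0)
    (hG : Gmap V x = Gmap V y) :
    ∃ g, x = fun k => u g k * y k := by
  obtain ⟨k₀, hk₀⟩ := hneg
  simp only [Gmap, Prod.mk.injEq, funext_iff] at hG
  obtain ⟨hsign, hmon⟩ := hG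
  set s := √|Qform V x|
  set t := √|Qform V y|
  have hs : 0 < s := Real.sqrt_pos.2 (abs_pos.2 hQx)
  have ht : 0 < t := Real.sqrt_pos.2 (abs_pos.2 hQy)
  have hsC : (s : ℂ) ≠ 0 := by exact_mod_cast hs.ne'
  have htC : (t : ℂ) ≠ 0 := by exact_mod_cast ht.ne'
  have hμ : ∀ k, (((t / s) ^ (cvec V k : ℝ) : ℝ) : ℂ) ≠ 0 := fun k =>
    Complex.ofReal_ne_zero.2 (Real.rpow_pos_of_pos (div_pos ht hs) _).ne'
  obtain ⟨g, hg⟩ := hsep _ _ (fun k => div_ne_zero (hx k) hsC)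
    (fun k => mul_ne_zero (hμ k) (div_ne_zero (hy k) htC))
    (monV_eq_monV_rpow_cvec_mul hV hs ht hmon)
  have hts : t / s = 1 := by
    refine eq_one_of_Qform_eq_of_norm_eq (z := fun k => x k / s) (w := fun k => y k / t)
      (div_pos ht hs) (fun k => ?_) ⟨k₀, hk₀.ne, div_ne_zero (hy k₀) htC⟩ ?_
    · rw [congrFun hg k, norm_mul, huabs, one_mul, norm_mul, Complex.norm_real,
        Real.norm_of_nonneg (by positivity)]
    · rwa [Qform_div_sqrt_abs, Qform_div_sqrt_abs]
  have hst : t = s := (div_eq_one_iff_eq hs.ne').1 hts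
  refine ⟨g, funext fun k => ?_⟩
  have hgk := congrFun hg k
  rw [hts, Real.one_rpow, Complex.ofReal_one, one_mul, hst] at hgk
  field_simp at hgk
  exact hgk

/-- let a finite group `G` act on `ℂ^N` by diagonal unitary matrices, and
let `V` be an invertible integer matrix such that `z ↦ z^V` is `G`-invariant and
separates orbits of vectors with all entries nonzero.  Suppose some entry of
`c = V⁻¹(1,…,1)ᵀ` is negative.  If `x, y` have all entries nonzero, `Q(x) ≠ 0`,
`Q(y) ≠ 0`, and `𝒢(x) = 𝒢(y)`, then `x ∼ y`. -/
theorem stmt12 (N : ℕ) (G : Type) [Group G] [Fintype G]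
    (u : G → Fin N → ℂ)
    (huabs : ∀ g k, ‖u g k‖ = 1)
    (huone : ∀ k, u 1 k = 1)
    (humul : ∀ g h k, u (g * h) k = u g k * u h k)
    (V : Matrix (Fin N) (Fin N) ℤ) (hV : V.det ≠ 0)
    (hGinv : ∀ g (z : Fin N → ℂ), (∀ k, z k ≠ 0) →
      monV V (fun k => u g k * z k) = monV V z)
    (hsep : ∀ z w : Fin N → ℂ, (∀ k, z k ≠ 0) → (∀ k, w k ≠ 0) →
      monV V z = monV V w → ∃ g, z = fun k => u g k * w k)
    (hneg : ∃ k, cvec V k < 0)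
    (x y : Fin N → ℂ) (hx : ∀ k, x k ≠ 0) (hy : ∀ k, y k ≠ 0)
    (hQx : Qform V x ≠ 0) (hQy : Qform V y ≠ 0)
    (hG : Gmap V x = Gmap V y) :
    ∃ g, x = fun k => u g k * y k :=
  stmt12_general N G u huabs V hV hsep hneg x y hx hy hQx hQy hG
end
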